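/- (Upper and lower solution method) Let c < 0 and suppose there exist u₋, u₊ : V → ℝ with u₋ ≤ u₊ pointwise, Δ_p u₋ - c + h e^{u₋} ≥ 0 on V (lower solution), and Δ_p u₊ - c + h e^{u₊} ≤ 0 on V (upper solution). Then there exists a solution u of Δ_p u = c - h e^u with u₋ ≤ u ≤ u₊. -/

import Mathlib

/-!
Write the equation as `Δ_p u = f(·, u)` with `f i s = c - h i * exp s`, and let `F i` be a primitive
of `f i`. A minimiser `u` of the energy
`J v = (1 / (2p)) Σ_{i ∼ j} ω i j |v j - v i| ^ p + Σ_i μ i F i (v i)`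
over the compact box `um ≤ v ≤ up` solves the equation: by summation by parts,
`∂J/∂v_k = μ k (f k (v k) - Δ_p v k)`. If `u k < up k`, moving `u k` up does not decrease `J`,
so `Δ_p u k ≤ f k (u k)`; if `u k = up k`, the same inequality follows from the upper solution,
because `Δ_p u k ≤ Δ_p up k` when `u ≤ up` touch at `k`. The reverse inequality is symmetric.
-/

open Finset Real

/-- The discrete `p`-Laplacian on a weighted graph with adjacency `A`,
edge weights `ω` and vertex measure `μ`:
`(Δ_p f)_i = (1/μ_i) Σ_{j ∼ i} ω_{ij} |f_j - f_i|^{p-2} (f_j - f_i)`. -/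
noncomputable def pLap {V : Type*} [Fintype V] (p : ℝ) (A : V → V → Prop) [DecidableRel A]
    (ω : V → V → ℝ) (μ : V → ℝ) (f : V → ℝ) : V → ℝ :=
  fun i => (1 / μ i) * ∑ j, if A i j then ω i j * |f j - f i| ^ (p - 2) * (f j - f i) else 0

/-- Sum of a symmetric function `g` over the (unordered) edges of the graph:
`Σ_{i∼j} g_{ij} = (1/2) Σ_i Σ_{j : A i j} g i j`. -/
noncomputable def edgeSum {V : Type*} [Fintype V] (A : V → V → Prop) [DecidableRel A]
    (g : V → V → ℝ) : ℝ :=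
  (1 / 2) * ∑ i, ∑ j, if A i j then g i j else 0

noncomputable def signedPow (p s : ℝ) : ℝ := |s| ^ (p - 2) * s

lemma signedPow_neg (p s : ℝ) : signedPow p (-s) = -signedPow p s := by
  rw [signedPow, signedPow, abs_neg, mul_neg]

lemma signedPow_of_nonneg {p s : ℝ} (hp : p ≠ 1) (hs : 0 ≤ s) : signedPow p s = s ^ (p - 1) := by
  obtain rfl | hs := hs.eq_or_lt
  · rw [signedPow, mul_zero, zero_rpow (sub_ne_zero.2 hp)]
  · rw [signedPow, abs_of_pos hs, ← rpow_add_one hs.ne']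
    ring_nf

lemma monotone_signedPow {p : ℝ} (hp : 1 < p) : Monotone (signedPow p) := by
  refine monotone_of_odd_of_monotoneOn_nonneg (signedPow_neg p) fun s hs t ht hst => ?_
  rw [signedPow_of_nonneg hp.ne' hs, signedPow_of_nonneg hp.ne' ht]
  exact rpow_le_rpow hs hst (by linarith)

lemma hasDerivAt_update_apply {V : Type*} [DecidableEq V] (u : V → ℝ) (k j : V) (t : ℝ) :
    HasDerivAt (fun s => Function.update u k s j) ((Pi.single k 1 : V → ℝ) j) t := by
  by_cases hjk : j = k
  · subst hjk
    simpa using hasDerivAt_id' t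
  · simpa [Function.update_of_ne hjk, Pi.single_apply, hjk] using hasDerivAt_const t (u j)

lemma IsLocalMinOn.hasDerivAt_mul_sub_nonneg {g : ℝ → ℝ} {s : Set ℝ} {x y d : ℝ}
    (hmin : IsLocalMinOn g s x) (hseg : segment ℝ x y ⊆ s) (hg : HasDerivAt g d x) :
    0 ≤ d * (y - x) := by
  simpa [mul_comm] using hmin.hasFDerivWithinAt_nonneg hg.hasFDerivAt.hasFDerivWithinAt
    (sub_mem_posTangentConeAt_of_segment_subset hseg)

noncomputable def pEnergy {V : Type*} [Fintype V] (p : ℝ) (A : V → V → Prop) [DecidableRel A]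
    (ω : V → V → ℝ) (μ : V → ℝ) (F : V → ℝ → ℝ) (v : V → ℝ) : ℝ :=
  edgeSum A (fun i j => ω i j * |v j - v i| ^ p / p) + ∑ i, μ i * F i (v i)

section Graph

variable {V : Type*} [Fintype V] {A : V → V → Prop} [DecidableRel A] {p : ℝ} {ω : V → V → ℝ}
  {μ : V → ℝ} {F f : V → ℝ → ℝ} {um up : V → ℝ}

lemma mul_pLap {i : V} (hμ : μ i ≠ 0) (v : V → ℝ) :
    μ i * pLap p A ω μ v i = ∑ j, if A i j then ω i j * signedPow p (v j - v i) else 0 := by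
  simp only [pLap, signedPow, mul_assoc]
  rw [← mul_assoc, mul_one_div_cancel hμ, one_mul]

lemma pLap_le_pLap_of_le_of_eq (hp : 1 < p) (hω : ∀ i j, A i j → 0 ≤ ω i j) {v w : V → ℝ}
    {i : V} (hμ : 0 < μ i) (hvw : v ≤ w) (hi : v i = w i) :
    pLap p A ω μ v i ≤ pLap p A ω μ w i := by
  rw [← mul_le_mul_iff_right₀ hμ, mul_pLap hμ.ne', mul_pLap hμ.ne']
  refine sum_le_sum fun j _ => ?_
  split_ifs with hij
  · exact mul_le_mul_of_nonneg_left
      (monotone_signedPow hp (by linarith [hvw j])) (hω i j hij)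
  · rfl

lemma edgeSum_mul_sub_of_antisymm (hA : Symmetric A) {g : V → V → ℝ}
    (hg : ∀ i j, A i j → g j i = -g i j) (e : V → ℝ) :
    edgeSum A (fun i j => g i j * (e j - e i)) = -∑ i, (∑ j, if A i j then g i j else 0) * e i := by
  have hswap : ∑ i, ∑ j, (if A i j then g i j * e j else 0)
      = -∑ i, ∑ j, (if A i j then g i j * e i else 0) := by
    rw [sum_comm, ← sum_neg_distrib]
    refine sum_congr rfl fun i _ => ?_
    rw [← sum_neg_distrib]
    refine sum_congr rfl fun j _ => ?_
    by_cases hij : A i j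
    · rw [if_pos (hA hij), if_pos hij, hg i j hij, neg_mul]
    · rw [if_neg (fun h => hij (hA h)), if_neg hij, neg_zero]
  have hsplit : ∀ i j, (if A i j then g i j * (e j - e i) else 0)
      = (if A i j then g i j * e j else 0) - (if A i j then g i j * e i else 0) := by
    intro i j
    split_ifs <;> ring
  simp only [edgeSum, hsplit, sum_sub_distrib, hswap, sum_mul, ite_mul, zero_mul]
  ring

lemma HasDerivAt.edgeSum {g : ℝ → V → V → ℝ} {g' : V → V → ℝ} {x : ℝ}
    (hg : ∀ i j, A i j → HasDerivAt (fun t => g t i j) (g' i j) x) :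
    HasDerivAt (fun t => _root_.edgeSum A (g t)) (_root_.edgeSum A g') x := by
  refine (HasDerivAt.fun_sum fun i _ => HasDerivAt.fun_sum fun j _ => ?_).const_mul (1 / 2)
  by_cases hij : A i j
  · simpa only [if_pos hij] using hg i j hij
  · simpa only [if_neg hij] using hasDerivAt_const x (0 : ℝ)

lemma continuous_pEnergy (hp : 0 ≤ p) (hF : ∀ i, Continuous (F i)) : Continuous (pEnergy p A ω μ F) := by
  refine (continuous_const.mul <| continuous_finsetSum _ fun i _ =>
    continuous_finsetSum _ fun j _ => ?_).add (by fun_prop)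
  split_ifs
  · have : Continuous fun v : V → ℝ => |v j - v i| ^ p :=
      (by fun_prop : Continuous fun v : V → ℝ => |v j - v i|).rpow_const fun _ => Or.inr hp
    fun_prop
  · exact continuous_const

lemma hasDerivAt_pEnergy_update [DecidableEq V] (hp : 1 < p) (hA : Symmetric A)
    (hω : ∀ i j, ω i j = ω j i) {k : V} (hμ : μ k ≠ 0) (hF : ∀ i s, HasDerivAt (F i) (f i s) s) (u : V → ℝ) (t : ℝ) :
    HasDerivAt (fun s => pEnergy p A ω μ F (Function.update u k s))
      (μ k * (f k t - pLap p A ω μ (Function.update u k t) k)) t := by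
  set w := Function.update u k t
  set e : V → ℝ := Pi.single k 1
  have hedge : HasDerivAt (fun s => edgeSum A (fun i j =>
        ω i j * |Function.update u k s j - Function.update u k s i| ^ p / p))
      (edgeSum A (fun i j => ω i j * signedPow p (w j - w i) * (e j - e i))) t := by
    refine HasDerivAt.edgeSum fun i j _ => ?_
    refine ((((hasDerivAt_abs_rpow _ hp).comp t ((hasDerivAt_update_apply u k j t).sub
      (hasDerivAt_update_apply u k i t))).const_mul (ω i j)).div_const p).congr_deriv ?_
    simp only [signedPow, e, w, Pi.sub_apply]
    field_simp
  have hpot : HasDerivAt (fun s => ∑ i, μ i * F i (Function.update u k s i))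
      (∑ i, μ i * (f i (w i) * e i)) t :=
    HasDerivAt.fun_sum fun i _ =>
      (((hF i _).comp t (hasDerivAt_update_apply u k i t))).const_mul (μ i)
  have hgreen := edgeSum_mul_sub_of_antisymm hA (g := fun i j => ω i j * signedPow p (w j - w i))
    (fun i j _ => by rw [hω, ← neg_sub, signedPow_neg, mul_neg]) e
  refine (hedge.add hpot).congr_deriv ?_
  rw [hgreen]
  simp only [e, Pi.single_apply, mul_ite, mul_one, mul_zero, sum_ite_eq', mem_univ, if_true]
  rw [← mul_pLap hμ, show w k = t from Function.update_self k t u]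
  ring

lemma pLap_eq_of_isMinOn_pEnergy (hp : 1 < p) (hA : Symmetric A) (hωsymm : ∀ i j, ω i j = ω j i)
    (hω : ∀ i j, A i j → 0 ≤ ω i j) (hμ : ∀ i, 0 < μ i) (hF : ∀ i s, HasDerivAt (F i) (f i s) s)
    (hlower : ∀ i, f i (um i) ≤ pLap p A ω μ um i) (hupper : ∀ i, pLap p A ω μ up i ≤ f i (up i))
    {u : V → ℝ} (hu : u ∈ Set.Icc um up) (hmin : IsMinOn (pEnergy p A ω μ F) (Set.Icc um up) u)
    (k : V) : pLap p A ω μ u k = f k (u k) := by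
  classical
  set g := fun t => pEnergy p A ω μ F (Function.update u k t)
  have hg : HasDerivAt g (μ k * (f k (u k) - pLap p A ω μ u k)) (u k) := by
    simpa using hasDerivAt_pEnergy_update hp hA hωsymm (hμ k).ne' hF u (u k)
  have hgmin : IsLocalMinOn g (Set.Icc (um k) (up k)) (u k) := by
    refine IsMinOn.localize fun t ht => ?_
    simpa [g] using hmin ⟨le_update_iff.2 ⟨ht.1, fun j _ => hu.1 j⟩,
      update_le_iff.2 ⟨ht.2, fun j _ => hu.2 j⟩⟩
  have hseg {y} (hy : y ∈ Set.Icc (um k) (up k)) : segment ℝ (u k) y ⊆ Set.Icc (um k) (up k) :=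
    (convex_Icc _ _).segment_subset ⟨hu.1 k, hu.2 k⟩ hy
  have hk : um k ≤ up k := (hu.1 k).trans (hu.2 k)
  apply le_antisymm
  · rcases (hu.2 k).lt_or_eq with hlt | heq
    · have hd := (mul_nonneg_iff_of_pos_right (sub_pos.2 hlt)).1
        (hgmin.hasDerivAt_mul_sub_nonneg (hseg ⟨hk, le_rfl⟩) hg)
      linarith [(mul_nonneg_iff_of_pos_left (hμ k)).1 hd]
    · calc pLap p A ω μ u k ≤ pLap p A ω μ up k := pLap_le_pLap_of_le_of_eq hp hω (hμ k) hu.2 heq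
        _ ≤ f k (up k) := hupper k
        _ = f k (u k) := by rw [heq]
  · rcases (hu.1 k).lt_or_eq with hlt | heq
    · have hd := nonpos_of_mul_nonneg_left
        (hgmin.hasDerivAt_mul_sub_nonneg (hseg ⟨le_rfl, hk⟩) hg) (sub_neg.2 hlt)
      linarith [nonpos_of_mul_nonpos_right hd (hμ k)]
    · calc f k (u k) = f k (um k) := by rw [heq]
        _ ≤ pLap p A ω μ um k := hlower k
        _ ≤ pLap p A ω μ u k := pLap_le_pLap_of_le_of_eq hp hω (hμ k) hu.1 heq

theorem exists_pLap_eq_of_lower_upper (hp : 1 < p) (hA : Symmetric A)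
    (hωsymm : ∀ i j, ω i j = ω j i) (hω : ∀ i j, A i j → 0 ≤ ω i j) (hμ : ∀ i, 0 < μ i)
    (hF : ∀ i s, HasDerivAt (F i) (f i s) s) (hle : um ≤ up)
    (hlower : ∀ i, f i (um i) ≤ pLap p A ω μ um i) (hupper : ∀ i, pLap p A ω μ up i ≤ f i (up i)) :
    ∃ u, um ≤ u ∧ u ≤ up ∧ ∀ i, pLap p A ω μ u i = f i (u i) := by
  have hFcont i : Continuous (F i) := continuous_iff_continuousAt.2 fun s => (hF i s).continuousAt
  obtain ⟨u, hu, hmin⟩ : ∃ u ∈ Set.Icc um up, IsMinOn (pEnergy p A ω μ F) (Set.Icc um up) u :=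
    isCompact_Icc.exists_isMinOn (Set.nonempty_Icc.2 hle)
      (continuous_pEnergy (by linarith) hFcont).continuousOn
  exact ⟨u, hu.1, hu.2,
    pLap_eq_of_isMinOn_pEnergy hp hA hωsymm hω hμ hF hlower hupper hu hmin⟩

end Graph

theorem stmt16_general {V : Type*} [Fintype V] (p : ℝ) (hp : 1 < p)
    (A : V → V → Prop) [DecidableRel A] (hA : Symmetric A)
    (ω : V → V → ℝ) (hωsymm : ∀ i j, ω i j = ω j i) (hωpos : ∀ i j, A i j → 0 < ω i j)
    (μ : V → ℝ) (hμ : ∀ i, 0 < μ i)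
    (h : V → ℝ)
    (c : ℝ) (um up : V → ℝ) (hle : ∀ i, um i ≤ up i)
    (hlower : ∀ i, 0 ≤ pLap p A ω μ um i - c + h i * Real.exp (um i))
    (hupper : ∀ i, pLap p A ω μ up i - c + h i * Real.exp (up i) ≤ 0) :
    ∃ u : V → ℝ, (∀ i, pLap p A ω μ u i = c - h i * Real.exp (u i)) ∧
      (∀ i, um i ≤ u i) ∧ (∀ i, u i ≤ up i) := by
  have hF i s : HasDerivAt (fun s => c * s - h i * exp s) (c - h i * exp s) s := by
    simpa using ((hasDerivAt_id' s).const_mul c).fun_sub ((hasDerivAt_exp s).const_mul (h i))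
  obtain ⟨u, hum, hup, hu⟩ := exists_pLap_eq_of_lower_upper hp hA hωsymm
    (fun i j hij => (hωpos i j hij).le) hμ hF hle (fun i => by linarith [hlower i])
    (fun i => by linarith [hupper i])
  exact ⟨u, hu, hum, hup⟩

/-- the method of upper and lower solutions for `Δ_p u = c - h e^u`, `c < 0`. -/
theorem stmt16 {V : Type*} [Fintype V] [Nonempty V] (p : ℝ) (hp : 1 < p)
    (A : V → V → Prop) [DecidableRel A] (hA : Symmetric A)
    (ω : V → V → ℝ) (hωsymm : ∀ i j, ω i j = ω j i) (hωpos : ∀ i j, A i j → 0 < ω i j)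
    (μ : V → ℝ) (hμ : ∀ i, 0 < μ i)
    (hconn : ∀ i j : V, Relation.ReflTransGen A i j) (h : V → ℝ) (hbar : (∑ i, μ i * h i) / (∑ i, μ i) < 0)
    (c : ℝ) (hc : c < 0) (um up : V → ℝ) (hle : ∀ i, um i ≤ up i)
    (hlower : ∀ i, 0 ≤ pLap p A ω μ um i - c + h i * Real.exp (um i))
    (hupper : ∀ i, pLap p A ω μ up i - c + h i * Real.exp (up i) ≤ 0) :
    ∃ u : V → ℝ, (∀ i, pLap p A ω μ u i = c - h i * Real.exp (u i)) ∧
      (∀ i, um i ≤ u i) ∧ (∀ i, u i ≤ up i) :=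
  stmt16_general p hp A hA ω hωsymm hωpos μ hμ h c um up hle hlower hupper
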